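/- Let Cₙ be the cycle with n vertices, n > 2. Then its covered components polynomial satisfies the explicit formula C(Cₙ,x,y,z) = xⁿ + ∑_{i=1}^{n−1} (n/(n−i))·x^{n−i} y^{i} ∑_{k=1}^{min(i, n−i)} C(i−1,k−1)·C(n−i,k)·z^{k} + x yⁿ z, where C(a,b) denotes the binomial coefficient. In particular, the coefficient of x^{n−k} y^{k} z^{k} in C(Cₙ) equals (n/(n−k))·C(n−k, k), the number of k-matchings of Cₙ. -/

import Mathlib

open MvPolynomial Finset
open scoped Classical

noncomputable section

variable {V : Type}

/-- The (finite) edge set of a simple graph on a finite vertex type, as a `Finset`. -/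
def edgeFinset' [Fintype V] (G : SimpleGraph V) : Finset (Sym2 V) :=
  (Set.toFinite G.edgeSet).toFinset

/-- `k(G)`: the number of connected components of `G`. -/
def kG (G : SimpleGraph V) : ℕ := Nat.card G.ConnectedComponent

/-- `c(G)`: the number of covered components of `G`, i.e. connected components
containing at least one edge. -/
def cG (G : SimpleGraph V) : ℕ :=
  Nat.card {c : G.ConnectedComponent // ∃ v w, G.Adj v w ∧ G.connectedComponentMk v = c}

/-- The covered components polynomial
`C(G,x,y,z) = ∑_{A ⊆ E} x^{k(⟨A⟩)} y^{|A|} z^{c(⟨A⟩)}` of a finite simple graph, where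
`⟨A⟩` denotes the spanning subgraph with edge set `A`, and `x = X 0`, `y = X 1`,
`z = X 2`. -/
def ccp [Fintype V] (G : SimpleGraph V) : MvPolynomial (Fin 3) ℤ :=
  ∑ A ∈ (edgeFinset' G).powerset,
    X 0 ^ kG (SimpleGraph.fromEdgeSet (A : Set (Sym2 V))) * X 1 ^ A.card *
      X 2 ^ cG (SimpleGraph.fromEdgeSet (A : Set (Sym2 V)))

/-- `[x^i y^j z^k] P`: the coefficient of the monomial `x^i y^j z^k`. -/
def coeff3 (P : MvPolynomial (Fin 3) ℤ) (i j k : ℕ) : ℤ :=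
  MvPolynomial.coeff (Finsupp.single 0 i + Finsupp.single 1 j + Finsupp.single 2 k) P

/-- `Cₙ`: the cycle with `n` vertices `0, 1, …, n−1` and edges `{i, i+1 mod n}`. -/
def cycleG (n : ℕ) : SimpleGraph (Fin n) :=
  SimpleGraph.fromRel (fun i j => ((i : ℕ) + 1) % n = (j : ℕ))

/-- The number of `k`-matchings of the cycle `Cₙ`: edge subsets of size `k` consisting
of pairwise non-adjacent edges. -/
def numMatchings (n k : ℕ) : ℕ :=
  ((edgeFinset' (cycleG n)).powerset.filter (fun (A : Finset (Sym2 (Fin n))) =>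
    A.card = k ∧ ∀ e ∈ A, ∀ f ∈ A, e ≠ f → ∀ v : Fin n, ¬(v ∈ e ∧ v ∈ f))).card


/-!
Index the edges of `Cₙ` by `Fin n`, edge `v` joining `v` and `v + 1`. For a proper edge set `S`,
every component of `⟨S⟩` is a maximal run of consecutive edges together with its vertices (an
isolated vertex being an empty run), so `k = n - |S|`, and the covered components are the
nonempty runs; the full edge set contributes `x yⁿ z`. Cutting the cycle open at a vertex
`j ∉ S` turns `S` into a subset of `{1, …, n - 1}` with the same runs, and removing the largest
element gives a recursion whose solution is `C(i-1,k-1) C(n-i,k)`. Double counting the pairs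
`(S, j)` with `j ∉ S` then produces the factor `n / (n - i)`. A `k`-matching is an edge set of
size `k` with `k` runs.
-/

open Fin.NatCast Fin.CommRing

lemma SimpleGraph.IsIsolated.eq_of_reachable {V : Type*} {G : SimpleGraph V} {v w : V}
    (hv : G.IsIsolated v) (h : G.Reachable v w) : v = w := by
  obtain ⟨p⟩ := h
  cases p with
  | nil => rfl
  | cons hadj _ => exact absurd hadj (hv _)

/-- A component without edges is the singleton of an isolated vertex. -/
theorem cG_add_card_isIsolated {V : Type} [Finite V] (G : SimpleGraph V) :
    cG G + Nat.card {v // G.IsIsolated v} = kG G := by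
  set covered := fun c : G.ConnectedComponent =>
    ∃ v w, G.Adj v w ∧ G.connectedComponentMk v = c
  have hiso : Nat.card {v // G.IsIsolated v} = Nat.card {c // ¬covered c} := by
    refine Nat.card_eq_of_bijective (fun v => ⟨G.connectedComponentMk v.1, ?_⟩) ⟨?_, ?_⟩
    · rintro ⟨a, b, hab, hmk⟩
      obtain rfl := v.2.eq_of_reachable (SimpleGraph.ConnectedComponent.exact hmk.symm)
      exact v.2 b hab
    · intro ⟨v, hv⟩ ⟨w, _⟩ h
      exact Subtype.ext (hv.eq_of_reachable (SimpleGraph.ConnectedComponent.exact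
        (congrArg Subtype.val h)))
    · rintro ⟨c, hc⟩
      induction c using SimpleGraph.ConnectedComponent.ind with
      | _ v => exact ⟨⟨v, fun w hvw => hc ⟨v, w, hvw, rfl⟩⟩, rfl⟩
  rw [cG, hiso, kG, ← Nat.card_sum]
  exact Nat.card_congr (Equiv.sumCompl covered)

section Runs

variable {α β : Type*} [DecidableEq α] [Sub α] [One α] [DecidableEq β] [Sub β] [One β]

/-- The number of maximal runs `a, a + 1, …` in `S`, counted by their first elements (cyclic
runs in `Fin n`). -/
def runs (S : Finset α) : ℕ := #{a ∈ S | a - 1 ∉ S}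

lemma runs_le_card (S : Finset α) : runs S ≤ #S := card_filter_le _ _

lemma runs_image {f : α → β} (hf : Function.Injective f) {S : Finset α}
    (h : ∀ a ∈ S, f a - 1 = f (a - 1)) : runs (S.image f) = runs S := by
  rw [runs, filter_image, card_image_of_injective _ hf, runs]
  congr 1
  refine filter_congr fun a ha => ?_
  rw [h a ha, hf.mem_finset_image]

end Runs

lemma Fin.card_filter_notMem {n : ℕ} (S : Finset (Fin n)) : #{v | v ∉ S} = n - #S := by
  rw [filter_notMem_eq_sdiff, card_univ_sdiff, Fintype.card_fin]

section CycleSubgraph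

variable {n : ℕ} [NeZero n]

def cycleEdge (v : Fin n) : Sym2 (Fin n) := s(v, v + 1)

def cycleSubgraph (S : Finset (Fin n)) : SimpleGraph (Fin n) :=
  SimpleGraph.fromEdgeSet (S.image cycleEdge : Set (Sym2 (Fin n)))

lemma cycleEdge_injective (hn : 2 < n) : Function.Injective (cycleEdge (n := n)) := by
  intro a b hab
  rcases Sym2.eq_iff.mp hab with ⟨h, -⟩ | ⟨rfl, hb⟩
  · exact h
  · have h2 : ((2 : ℕ) : Fin n) = 0 := by
      simpa [add_assoc, one_add_one_eq_two] using hb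
    exact absurd (Nat.le_of_dvd two_pos (Fin.natCast_eq_zero.mp h2)) (by omega)

variable [Nontrivial (Fin n)]

lemma Fin.self_ne_add_one (v : Fin n) : v ≠ v + 1 := left_ne_add.mpr one_ne_zero

lemma cycleSubgraph_adj {S : Finset (Fin n)} {u v : Fin n} :
    (cycleSubgraph S).Adj u v ↔ u ∈ S ∧ v = u + 1 ∨ v ∈ S ∧ u = v + 1 := by
  simp only [cycleSubgraph, SimpleGraph.fromEdgeSet_adj, coe_image, Set.mem_image, mem_coe,
    cycleEdge, Sym2.eq_iff]
  constructor
  · rintro ⟨⟨a, ha, ⟨rfl, rfl⟩ | ⟨rfl, rfl⟩⟩, -⟩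
    exacts [Or.inl ⟨ha, rfl⟩, Or.inr ⟨ha, rfl⟩]
  · rintro (⟨hu, rfl⟩ | ⟨hv, rfl⟩)
    · exact ⟨⟨u, hu, Or.inl ⟨rfl, rfl⟩⟩, Fin.self_ne_add_one u⟩
    · exact ⟨⟨v, hv, Or.inr ⟨rfl, rfl⟩⟩, (Fin.self_ne_add_one v).symm⟩

lemma cycleSubgraph_adj_add_one {S : Finset (Fin n)} {v : Fin n} (hv : v ∈ S) :
    (cycleSubgraph S).Adj v (v + 1) :=
  cycleSubgraph_adj.mpr (Or.inl ⟨hv, rfl⟩)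

lemma cycleG_eq_cycleSubgraph_univ : cycleG n = cycleSubgraph univ := by
  have h1 : 1 % n = 1 :=
    Nat.one_mod_eq_one.mpr (by have := Fin.nontrivial_iff_two_le.mp ‹_›; omega)
  have hsucc (u v : Fin n) : ((u : ℕ) + 1) % n = v ↔ v = u + 1 := by
    rw [eq_comm, Fin.ext_iff, Fin.val_add, Fin.val_one', h1]
  ext u v
  rw [cycleG, SimpleGraph.fromRel_adj, hsucc, hsucc, cycleSubgraph_adj]
  simp only [mem_univ, true_and, and_iff_right_iff_imp]
  rintro (rfl | rfl)
  exacts [Fin.self_ne_add_one u, (Fin.self_ne_add_one v).symm]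

lemma edgeFinset'_cycleG : edgeFinset' (cycleG n) = univ.image cycleEdge := by
  ext e
  simp only [edgeFinset', Set.Finite.mem_toFinset, cycleG_eq_cycleSubgraph_univ, cycleSubgraph,
    SimpleGraph.edgeSet_fromEdgeSet, Set.mem_sdiff, coe_image, Set.mem_image, mem_image,
    mem_coe, mem_univ, true_and, Sym2.mem_diagSet, and_iff_left_iff_imp]
  rintro ⟨v, rfl⟩
  exact Sym2.mk_isDiag_iff.not.mpr (Fin.self_ne_add_one v)

lemma ccp_cycleG (hn : 2 < n) :
    ccp (cycleG n) = ∑ S : Finset (Fin n),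
      X 0 ^ kG (cycleSubgraph S) * X 1 ^ #S * X 2 ^ cG (cycleSubgraph S) := by
  rw [ccp, edgeFinset'_cycleG, powerset_image,
    sum_image (image_injective (cycleEdge_injective hn)).injOn, powerset_univ]
  simp only [card_image_of_injective _ (cycleEdge_injective hn)]
  rfl

end CycleSubgraph

section Components

variable {n : ℕ} [NeZero n] {S : Finset (Fin n)}

lemma Fin.card_filter_sub_one_notMem (S : Finset (Fin n)) : #{v | v - 1 ∉ S} = n - #S := by
  rw [card_equiv (Equiv.subRight 1) (t := {v | v ∉ S}) (by simp), Fin.card_filter_notMem]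

lemma cycleSubgraph_isIsolated_iff [Nontrivial (Fin n)] {v : Fin n} :
    (cycleSubgraph S).IsIsolated v ↔ v ∉ S ∧ v - 1 ∉ S := by
  constructor
  · intro hv
    refine ⟨fun h => hv _ (cycleSubgraph_adj_add_one h), fun h => hv (v - 1) ?_⟩
    simpa using (cycleSubgraph_adj_add_one h).symm
  · rintro ⟨hv, hv'⟩ w hadj
    rcases cycleSubgraph_adj.mp hadj with ⟨h, -⟩ | ⟨h, rfl⟩
    exacts [hv h, hv' (by simpa using h)]

lemma exists_sub_sub_one_notMem (hS : S ≠ univ) (v : Fin n) : ∃ t : ℕ, v - t - 1 ∉ S := by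
  obtain ⟨a, ha⟩ := not_forall.mp (mt eq_univ_iff_forall.mpr hS)
  refine ⟨(v - 1 - a : Fin n), ?_⟩
  rwa [Fin.cast_val_eq_self, sub_right_comm, sub_sub_cancel]

/-- The vertex reached by walking back from `v` along the edges of `S` as far as possible. -/
def runStart (hS : S ≠ univ) (v : Fin n) : Fin n :=
  v - (Nat.find (exists_sub_sub_one_notMem hS v) : ℕ)

variable (hS : S ≠ univ)
include hS

lemma runStart_sub_one_notMem (v : Fin n) : runStart hS v - 1 ∉ S :=
  Nat.find_spec (exists_sub_sub_one_notMem hS v)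

lemma runStart_eq {v : Fin n} {t : ℕ} (ht : v - t - 1 ∉ S) (hlt : ∀ s < t, v - s - 1 ∈ S) :
    runStart hS v = v - t := by
  rw [runStart, (Nat.find_eq_iff (exists_sub_sub_one_notMem hS v)).mpr
    ⟨ht, fun s hs => not_not.mpr (hlt s hs)⟩]

lemma runStart_eq_self {v : Fin n} (hv : v - 1 ∉ S) : runStart hS v = v := by
  simpa using runStart_eq hS (t := 0) (by simpa using hv) (by simp)

lemma runStart_add_one {v : Fin n} (hv : v ∈ S) : runStart hS (v + 1) = runStart hS v := by
  have hex := exists_sub_sub_one_notMem hS v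
  set t := Nat.find hex
  have hshift (s : ℕ) : v + 1 - ((s + 1 : ℕ) : Fin n) - 1 = v - s - 1 := by push_cast; ring
  rw [runStart_eq hS (t := t + 1) (by rw [hshift]; exact Nat.find_spec hex)]
  · rw [runStart]; push_cast; ring
  · rintro (_ | s) hs
    · simpa using hv
    · rw [hshift]
      exact not_not.mp (Nat.find_min hex (by omega : s < t))

variable [Nontrivial (Fin n)]

lemma reachable_runStart (v : Fin n) : (cycleSubgraph S).Reachable (runStart hS v) v := by
  suffices h : ∀ t : ℕ, (∀ s < t, v - s - 1 ∈ S) →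
      (cycleSubgraph S).Reachable (v - t) v from
    h _ fun s hs => not_not.mp (Nat.find_min (exists_sub_sub_one_notMem hS v) hs)
  intro t
  induction t with
  | zero => simp
  | succ t ih =>
    intro hlt
    have hadj := cycleSubgraph_adj_add_one (hlt t (by omega))
    rw [sub_add_cancel] at hadj
    have hcast : v - ((t + 1 : ℕ) : Fin n) = v - t - 1 := by push_cast; ring
    rw [hcast]
    exact hadj.reachable.trans (ih fun s hs => hlt s (by omega))

lemma runStart_eq_of_reachable {u w : Fin n} (h : (cycleSubgraph S).Reachable u w) :
    runStart hS u = runStart hS w := by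
  obtain ⟨p⟩ := h
  induction p with
  | nil => rfl
  | cons hadj _ ih =>
    rw [← ih]
    rcases cycleSubgraph_adj.mp hadj with ⟨hu, rfl⟩ | ⟨hw, rfl⟩
    exacts [(runStart_add_one hS hu).symm, runStart_add_one hS hw]

def componentEquivRunStarts :
    (cycleSubgraph S).ConnectedComponent ≃ {v : Fin n // v - 1 ∉ S} where
  toFun := SimpleGraph.ConnectedComponent.lift
    (fun v => ⟨runStart hS v, runStart_sub_one_notMem hS v⟩)
    (fun _ _ p _ => Subtype.ext (runStart_eq_of_reachable hS p.reachable))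
  invFun v := (cycleSubgraph S).connectedComponentMk v
  left_inv c := by
    induction c using SimpleGraph.ConnectedComponent.ind with
    | _ v => exact SimpleGraph.ConnectedComponent.sound (reachable_runStart hS v)
  right_inv v := Subtype.ext (runStart_eq_self hS v.2)

lemma kG_cycleSubgraph : kG (cycleSubgraph S) = n - #S := by
  rw [kG, Nat.card_congr (componentEquivRunStarts hS), Nat.card_eq_fintype_card,
    Fintype.card_subtype, Fin.card_filter_sub_one_notMem]

lemma cG_cycleSubgraph : cG (cycleSubgraph S) = runs S := by
  have h := cG_add_card_isIsolated (cycleSubgraph S)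
  rw [kG_cycleSubgraph hS, ← Fin.card_filter_sub_one_notMem, Nat.card_eq_fintype_card,
    Fintype.card_subtype] at h
  simp_rw [cycleSubgraph_isIsolated_iff] at h
  have hsplit : runs S + #{v | v ∉ S ∧ v - 1 ∉ S} = #{v | v - 1 ∉ S} := by
    rw [runs, ← card_union_of_disjoint (disjoint_left.mpr fun v h1 h2 =>
      (mem_filter.mp h2).2.1 (mem_filter.mp h1).1)]
    congr 1
    ext v
    by_cases hv : v ∈ S <;> simp [hv]
  omega

omit hS in
lemma reachable_zero_cycleSubgraph_univ (v : Fin n) : (cycleSubgraph univ).Reachable 0 v := by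
  suffices h : ∀ t : ℕ, (cycleSubgraph univ).Reachable 0 (t : Fin n) by
    simpa only [Fin.cast_val_eq_self] using h v
  intro t
  induction t with
  | zero => simp
  | succ t ih =>
    simpa using ih.trans (cycleSubgraph_adj_add_one (mem_univ (t : Fin n))).reachable

omit hS in
lemma kG_cycleSubgraph_univ : kG (cycleSubgraph (univ : Finset (Fin n))) = 1 :=
  Nat.card_eq_one_iff_unique.mpr
    ⟨SimpleGraph.Preconnected.subsingleton_connectedComponent fun u v =>
      (reachable_zero_cycleSubgraph_univ u).symm.trans (reachable_zero_cycleSubgraph_univ v),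
      ⟨(cycleSubgraph univ).connectedComponentMk 0⟩⟩

omit hS in
lemma cG_cycleSubgraph_univ : cG (cycleSubgraph (univ : Finset (Fin n))) = 1 := by
  have h := cG_add_card_isIsolated (cycleSubgraph (univ : Finset (Fin n)))
  rwa [kG_cycleSubgraph_univ, Nat.card_eq_zero.mpr
    (Or.inl ⟨fun v => v.2 _ (cycleSubgraph_adj_add_one (mem_univ v.1))⟩), add_zero] at h

end Components

section LinearRuns

def linearRunSets (m i k : ℕ) : Finset (Finset ℕ) :=
  {T ∈ (Icc 1 m).powerset | #T = i ∧ runs T = k}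

lemma mem_linearRunSets {m i k : ℕ} {T : Finset ℕ} :
    T ∈ linearRunSets m i k ↔ T ⊆ Icc 1 m ∧ #T = i ∧ runs T = k := by
  rw [linearRunSets, mem_filter, mem_powerset]

lemma runs_pos {T : Finset ℕ} (hT : T.Nonempty) (h0 : 0 ∉ T) : 0 < runs T := by
  refine card_pos.mpr ⟨T.min' hT, mem_filter.mpr ⟨T.min'_mem hT, fun h => ?_⟩⟩
  have hpos : 0 < T.min' hT := Nat.pos_of_ne_zero fun h' => h0 (h' ▸ T.min'_mem hT)
  exact absurd (T.min'_le _ h) (by omega)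

lemma succ_notMem_of_subset_Icc {m : ℕ} {T : Finset ℕ} (hT : T ⊆ Icc 1 m) : m + 1 ∉ T :=
  fun h => by simpa using (mem_Icc.mp (hT h)).2

lemma runs_insert_succ {m : ℕ} {T : Finset ℕ} (hT : T ⊆ Icc 1 m) :
    runs (insert (m + 1) T) = runs T + if m ∈ T then 0 else 1 := by
  have hm := succ_notMem_of_subset_Icc hT
  have hfilter : {a ∈ T | a - 1 ∉ insert (m + 1) T} = {a ∈ T | a - 1 ∉ T} :=
    filter_congr fun a ha => by
      have := (mem_Icc.mp (hT ha)).2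
      rw [mem_insert, not_or, and_iff_right (by omega)]
  rw [runs, filter_insert, hfilter, runs, Nat.add_sub_cancel]
  by_cases hmT : m ∈ T
  · rw [if_neg (by simp [hmT]), if_pos hmT, add_zero]
  · rw [if_pos (by simp [hmT]), if_neg hmT,
      card_insert_of_notMem fun h => hm (mem_filter.mp h).1]

lemma card_filter_succ_mem_powerset (m : ℕ) (p : Finset ℕ → Prop) [DecidablePred p] :
    #{T ∈ (Icc 1 (m + 1)).powerset | m + 1 ∈ T ∧ p T} =
      #{T ∈ (Icc 1 m).powerset | p (insert (m + 1) T)} := by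
  symm
  refine card_nbij' (insert (m + 1)) (fun T => T.erase (m + 1)) ?_ ?_ ?_ ?_
  · intro T hT
    simp only [mem_coe, mem_filter, mem_powerset] at hT ⊢
    refine ⟨insert_subset (by simp) (hT.1.trans (Icc_subset_Icc_right (by omega))),
      mem_insert_self _ _, hT.2⟩
  · intro T hT
    simp only [mem_coe, mem_filter, mem_powerset] at hT ⊢
    refine ⟨fun a ha => ?_, by rw [insert_erase hT.2.1]; exact hT.2.2⟩
    have := mem_Icc.mp (hT.1 (mem_of_mem_erase ha))
    exact mem_Icc.mpr ⟨this.1, by have := ne_of_mem_erase ha; omega⟩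
  · intro T hT
    simp only [mem_coe, mem_filter, mem_powerset] at hT
    exact erase_insert (succ_notMem_of_subset_Icc hT.1)
  · intro T hT
    simp only [mem_coe, mem_filter, mem_powerset] at hT
    exact insert_erase hT.2.1

lemma filter_succ_notMem_linearRunSets (m i k : ℕ) :
    {T ∈ linearRunSets (m + 1) i k | m + 1 ∉ T} = linearRunSets m i k := by
  ext T
  simp only [mem_filter, mem_linearRunSets]
  constructor
  · rintro ⟨⟨hT, hi, hk⟩, hm⟩
    refine ⟨fun a ha => ?_, hi, hk⟩
    have := mem_Icc.mp (hT ha)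
    exact mem_Icc.mpr ⟨this.1, by have : a ≠ m + 1 := fun h => hm (h ▸ ha); omega⟩
  · rintro ⟨hT, hi, hk⟩
    exact ⟨⟨hT.trans (Icc_subset_Icc_right (by omega)), hi, hk⟩,
      succ_notMem_of_subset_Icc hT⟩

lemma linearRunSets_eq_empty_of_lt {m i : ℕ} (h : m < i) (k : ℕ) : linearRunSets m i k = ∅ :=
  eq_empty_of_forall_notMem fun T hT => by
    obtain ⟨hT, hi, -⟩ := mem_linearRunSets.mp hT
    have := card_le_card hT
    simp only [Nat.card_Icc, Nat.add_sub_cancel] at this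
    omega

lemma linearRunSets_succ_zero (m i : ℕ) : linearRunSets m (i + 1) 0 = ∅ :=
  eq_empty_of_forall_notMem fun T hT => by
    obtain ⟨hT, hi, hk⟩ := mem_linearRunSets.mp hT
    exact (runs_pos (card_pos.mp (by omega)) fun h => by simpa using hT h).ne' hk

lemma linearRunSets_zero (m k : ℕ) : linearRunSets m 0 k = if k = 0 then {∅} else ∅ := by
  ext T
  rw [mem_linearRunSets, card_eq_zero]
  split_ifs with hk <;> constructor
  · rintro ⟨-, rfl, -⟩
    exact mem_singleton_self _
  · intro hT
    rw [mem_singleton.mp hT]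
    exact ⟨empty_subset _, rfl, by simp [runs, hk]⟩
  · rintro ⟨-, rfl, h⟩
    simp [runs] at h
    omega
  · simp

lemma card_linearRunSets_succ_notMem (m i k : ℕ) :
    #{T ∈ linearRunSets (m + 1) i k | m + 1 ∉ T} =
      #{T ∈ linearRunSets m i k | m ∈ T} + #{T ∈ linearRunSets m i k | m ∉ T} := by
  rw [filter_succ_notMem_linearRunSets, card_filter_add_card_filter_not]

lemma card_linearRunSets_succ_mem (m i k : ℕ) :
    #{T ∈ linearRunSets (m + 1) (i + 1) (k + 1) | m + 1 ∈ T} =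
      #{T ∈ linearRunSets m i (k + 1) | m ∈ T} + #{T ∈ linearRunSets m i k | m ∉ T} := by
  have hfilter : {T ∈ linearRunSets (m + 1) (i + 1) (k + 1) | m + 1 ∈ T} =
      {T ∈ (Icc 1 (m + 1)).powerset | m + 1 ∈ T ∧ (#T = i + 1 ∧ runs T = k + 1)} := by
    rw [linearRunSets, filter_filter]
    exact filter_congr fun _ _ => and_comm
  have hinsert : ∀ T ∈ (Icc 1 m).powerset,
      (#(insert (m + 1) T) = i + 1 ∧ runs (insert (m + 1) T) = k + 1) ↔
        #T = i ∧ runs T + (if m ∈ T then 0 else 1) = k + 1 := fun T hT => by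
    rw [mem_powerset] at hT
    rw [card_insert_of_notMem (succ_notMem_of_subset_Icc hT), runs_insert_succ hT,
      Nat.add_right_cancel_iff]
  rw [hfilter, card_filter_succ_mem_powerset, filter_congr hinsert,
    ← card_filter_add_card_filter_not (fun T => m ∈ T), filter_filter, filter_filter,
    linearRunSets, linearRunSets, filter_filter, filter_filter]
  congr 2 <;> refine filter_congr fun T _ => ?_ <;> by_cases h : m ∈ T <;> simp [h]

theorem card_linearRunSets_filter {m i : ℕ} (hi : i < m) (k : ℕ) :
    #{T ∈ linearRunSets m (i + 1) (k + 1) | m ∈ T} = i.choose k * (m - i - 1).choose k ∧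
      #{T ∈ linearRunSets m (i + 1) (k + 1) | m ∉ T} =
        i.choose k * (m - i - 1).choose (k + 1) := by
  induction m generalizing i k with
  | zero => omega
  | succ m ih =>
    constructor
    · rw [card_linearRunSets_succ_mem]
      rcases i with _ | i
      · rcases k with _ | k <;> simp [linearRunSets_zero, filter_singleton]
      rcases k with _ | k
      · simp [linearRunSets_succ_zero, (ih (i := i) (by omega) 0).1]
      · rw [(ih (i := i) (by omega) (k + 1)).1, (ih (i := i) (by omega) k).2,
          Nat.choose_succ_succ' i, show m + 1 - (i + 1) - 1 = m - i - 1 by omega]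
        ring
    · rw [card_linearRunSets_succ_notMem]
      rcases (Nat.lt_succ_iff.mp hi).lt_or_eq with hi | rfl
      · rw [(ih hi k).1, (ih hi k).2, ← mul_add, ← Nat.choose_succ_succ',
          show m + 1 - i - 1 = m - i - 1 + 1 by omega]
      · simp [linearRunSets_eq_empty_of_lt (Nat.lt_succ_self i)]

theorem card_linearRunSets {m i : ℕ} (hi : i ≤ m) (k : ℕ) :
    #(linearRunSets m (i + 1) (k + 1)) = i.choose k * (m - i).choose (k + 1) := by
  rw [← filter_succ_notMem_linearRunSets, (card_linearRunSets_filter (by omega) k).2,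
    show m + 1 - i - 1 = m - i by omega]

end LinearRuns

section CyclicRuns

def cyclicRunSets (n i k : ℕ) [NeZero n] : Finset (Finset (Fin n)) :=
  {S | #S = i ∧ runs S = k}

variable {n : ℕ} [NeZero n]

/-- Cutting the cycle open at `j` turns a subset avoiding `j` into a subset of `{1, …, n - 1}`. -/
def forwardDist (j v : Fin n) : ℕ := (v - j : Fin n)

lemma forwardDist_injective (j : Fin n) : Function.Injective (forwardDist j) :=
  fun _ _ h => sub_left_injective (Fin.ext h)

lemma forwardDist_self (j : Fin n) : forwardDist j j = 0 := by simp [forwardDist]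

lemma forwardDist_mem_Icc {j v : Fin n} (h : v ≠ j) : forwardDist j v ∈ Icc 1 (n - 1) := by
  have hlt := (v - j).isLt
  have hne : forwardDist j v ≠ 0 := fun h0 => h (sub_eq_zero.mp (Fin.val_eq_zero_iff.mp h0))
  rw [mem_Icc]
  unfold forwardDist at hne ⊢
  omega

lemma forwardDist_sub_one {j v : Fin n} (h : v ≠ j) :
    forwardDist j v - 1 = forwardDist j (v - 1) := by
  rw [forwardDist, forwardDist, sub_right_comm, Fin.val_sub_one_of_ne_zero (sub_ne_zero.mpr h)]

lemma forwardDist_add_natCast (j : Fin n) {t : ℕ} (ht : t < n) : forwardDist j (j + t) = t := by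
  rw [forwardDist, add_sub_cancel_left, Fin.val_natCast, Nat.mod_eq_of_lt ht]

lemma card_filter_notMem_cyclicRunSets (i k : ℕ) (j : Fin n) :
    #{S ∈ cyclicRunSets n i k | j ∉ S} = #(linearRunSets (n - 1) i k) := by
  have hcut {S : Finset (Fin n)} (hj : j ∉ S) :
      #(S.image (forwardDist j)) = #S ∧ runs (S.image (forwardDist j)) = runs S := by
    have hne : ∀ v ∈ S, v ≠ j := fun v hv h => hj (h ▸ hv)
    exact ⟨card_image_of_injective _ (forwardDist_injective j),
      runs_image (forwardDist_injective j) fun v hv => forwardDist_sub_one (hne v hv)⟩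
  refine card_bij (fun S _ => S.image (forwardDist j)) ?_ ?_ ?_
  · intro S hS
    simp only [cyclicRunSets, mem_filter, mem_univ, true_and] at hS
    obtain ⟨⟨hi, hk⟩, hj⟩ := hS
    refine mem_linearRunSets.mpr ⟨?_, (hcut hj).1.trans hi, (hcut hj).2.trans hk⟩
    exact image_subset_iff.mpr fun v hv => forwardDist_mem_Icc fun h => hj (h ▸ hv)
  · exact fun S _ S' _ h => image_injective (forwardDist_injective j) h
  · intro T hT
    obtain ⟨hT, hi, hk⟩ := mem_linearRunSets.mp hT
    have hST : (T.image fun t : ℕ => j + (t : Fin n)).image (forwardDist j) = T := by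
      rw [image_image]
      refine (image_congr fun t ht => ?_).trans image_id
      exact forwardDist_add_natCast j (by have := mem_Icc.mp (hT ht); omega)
    have hj : j ∉ T.image fun t : ℕ => j + (t : Fin n) := fun h => by
      have := hST ▸ mem_image_of_mem (forwardDist j) h
      simpa [forwardDist_self] using hT this
    refine ⟨_, ?_, hST⟩
    simp only [cyclicRunSets, mem_filter, mem_univ, true_and]
    rw [← (hcut hj).1, ← (hcut hj).2, hST]
    exact ⟨⟨hi, hk⟩, hj⟩

/-- Double counting of the pairs `(S, j)` with `j ∉ S`. -/
theorem card_cyclicRunSets_mul (i k : ℕ) :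
    #(cyclicRunSets n i k) * (n - i) = n * #(linearRunSets (n - 1) i k) := by
  have h := card_mul_eq_card_mul (fun (S : Finset (Fin n)) j => j ∉ S)
    (s := cyclicRunSets n i k) (t := univ) (m := n - i) (n := #(linearRunSets (n - 1) i k))
    (fun S hS => ?_) (fun j _ => card_filter_notMem_cyclicRunSets i k j)
  · rwa [card_univ, Fintype.card_fin] at h
  · simp only [cyclicRunSets, mem_filter, mem_univ, true_and] at hS
    rw [bipartiteAbove, Fin.card_filter_notMem, hS.1]

end CyclicRuns

section CyclicCount

variable {n i k : ℕ} [NeZero n]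

theorem card_cyclicRunSets_mul_sub (hi : 0 < i) (hin : i < n) (hk : 0 < k) :
    #(cyclicRunSets n i k) * (n - i) = n * ((i - 1).choose (k - 1) * (n - i).choose k) := by
  obtain ⟨i, rfl⟩ : ∃ i', i = i' + 1 := ⟨i - 1, by omega⟩
  obtain ⟨k, rfl⟩ : ∃ k', k = k' + 1 := ⟨k - 1, by omega⟩
  rw [card_cyclicRunSets_mul, card_linearRunSets (by omega), show n - 1 - i = n - (i + 1) by omega]
  simp

lemma card_cyclicRunSets_eq_zero (hi : 0 < i) (hin : i < n) (hk : k = 0 ∨ n - i < k) :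
    #(cyclicRunSets n i k) = 0 := by
  have hmul : #(cyclicRunSets n i k) * (n - i) = 0 := by
    rcases hk with rfl | hk
    · obtain ⟨i, rfl⟩ : ∃ i', i = i' + 1 := ⟨i - 1, by omega⟩
      rw [card_cyclicRunSets_mul, linearRunSets_succ_zero, card_empty, mul_zero]
    · rw [card_cyclicRunSets_mul_sub hi hin (by omega), Nat.choose_eq_zero_of_lt hk]
      simp
  exact (Nat.mul_eq_zero.mp hmul).resolve_right (by omega)

theorem cast_card_cyclicRunSets (hi : 0 < i) (hin : i < n) (hk : 0 < k) :
    (#(cyclicRunSets n i k) : ℚ) = n / (n - i) * ((i - 1).choose (k - 1) * (n - i).choose k) := by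
  have h := congrArg (Nat.cast : ℕ → ℚ) (card_cyclicRunSets_mul_sub hi hin hk)
  push_cast [Nat.cast_sub hin.le] at h
  have hpos : (0 : ℚ) < n - i := sub_pos.mpr (by exact_mod_cast hin)
  field_simp
  linarith

end CyclicCount

section Polynomial

lemma single_add_single_add_single_eq_iff {a b c a' b' c' : ℕ} :
    Finsupp.single (0 : Fin 3) a + Finsupp.single 1 b + Finsupp.single 2 c =
        Finsupp.single 0 a' + Finsupp.single 1 b' + Finsupp.single 2 c' ↔
      a = a' ∧ b = b' ∧ c = c' := by
  constructor
  · intro h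
    exact ⟨by simpa using DFunLike.congr_fun h 0, by simpa using DFunLike.congr_fun h 1,
      by simpa using DFunLike.congr_fun h 2⟩
  · rintro ⟨rfl, rfl, rfl⟩
    rfl

lemma coeff3_sum_X_pow {ι : Type*} (s : Finset ι) (a b c : ι → ℕ) (i j k : ℕ) :
    coeff3 (∑ x ∈ s, X 0 ^ a x * X 1 ^ b x * X 2 ^ c x) i j k =
      #{x ∈ s | a x = i ∧ b x = j ∧ c x = k} := by
  simp only [coeff3, coeff_sum, X_pow_eq_monomial, monomial_mul, coeff_monomial, mul_one,
    single_add_single_add_single_eq_iff, sum_boole]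

lemma runs_eq_card_iff {α : Type*} [DecidableEq α] [Sub α] [One α] {S : Finset α} :
    runs S = #S ↔ ∀ a ∈ S, a - 1 ∉ S :=
  card_filter_eq_iff

lemma filter_card_eq_univ {n : ℕ} : ({S | #S = n} : Finset (Finset (Fin n))) = {univ} := by
  ext S
  rw [mem_filter, mem_singleton, ← card_eq_iff_eq_univ, Fintype.card_fin]
  simp

variable {n : ℕ} [NeZero n] [Nontrivial (Fin n)]

lemma coeff3_ccp_cycleG (hn : 2 < n) {k : ℕ} (hkn : k < n) :
    coeff3 (ccp (cycleG n)) (n - k) k k = #(cyclicRunSets n k k) := by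
  rw [ccp_cycleG hn, coeff3_sum_X_pow, cyclicRunSets]
  congr 2
  refine filter_congr fun S _ => ?_
  by_cases hS : S = univ
  · subst hS
    simp only [card_univ, Fintype.card_fin]
    omega
  · rw [kG_cycleSubgraph hS, cG_cycleSubgraph hS]
    omega

lemma isMatching_image_cycleEdge_iff (hn : 2 < n) {S : Finset (Fin n)} :
    (∀ e ∈ S.image cycleEdge, ∀ f ∈ S.image cycleEdge, e ≠ f →
        ∀ v, ¬(v ∈ e ∧ v ∈ f)) ↔
      ∀ a ∈ S, a - 1 ∉ S := by
  simp only [mem_image, forall_exists_index, and_imp, forall_apply_eq_imp_iff₂, cycleEdge,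
    Sym2.mem_iff]
  constructor
  · intro h a ha ha'
    refine h (a - 1) ha' a ha ?_ a ⟨Or.inr (sub_add_cancel a 1).symm, Or.inl rfl⟩
    exact fun he => one_ne_zero (sub_eq_self.mp (cycleEdge_injective hn he))
  · rintro h a ha b hb hab v ⟨rfl | rfl, hvb | hvb⟩
    · exact hab (by rw [hvb])
    · exact h v ha (by rwa [hvb, add_sub_cancel_right])
    · exact h b hb (by rwa [← hvb, add_sub_cancel_right])
    · exact hab (by rw [add_right_cancel hvb])

lemma numMatchings_eq_card_cyclicRunSets (hn : 2 < n) (k : ℕ) :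
    numMatchings n k = #(cyclicRunSets n k k) := by
  rw [numMatchings, edgeFinset'_cycleG, powerset_image, filter_image,
    card_image_of_injective _ (image_injective (cycleEdge_injective hn)), powerset_univ,
    cyclicRunSets]
  congr 1
  refine filter_congr fun S _ => ?_
  rw [card_image_of_injective _ (cycleEdge_injective hn), isMatching_image_cycleEdge_iff hn,
    ← runs_eq_card_iff]
  exact and_congr_right fun h => by rw [h]

omit [Nontrivial (Fin n)] in
lemma sum_X_pow_runs {i : ℕ} (hi : 0 < i) (hin : i < n) :
    ∑ S : Finset (Fin n) with #S = i, (X 2 : MvPolynomial (Fin 3) ℚ) ^ runs S =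
      C ((n : ℚ) / (n - i)) * ∑ k ∈ Icc 1 (min i (n - i)),
        (((i - 1).choose (k - 1) * (n - i).choose k : ℕ) : MvPolynomial (Fin 3) ℚ) *
          X 2 ^ k := by
  have hfiber (k : ℕ) : ∑ S ∈ {S : Finset (Fin n) | #S = i} with runs S = k,
      (X 2 : MvPolynomial (Fin 3) ℚ) ^ runs S =
        (#(cyclicRunSets n i k) : MvPolynomial (Fin 3) ℚ) * X 2 ^ k := by
    rw [filter_filter, sum_congr rfl fun S hS => by rw [(mem_filter.mp hS).2.2], sum_const,
      nsmul_eq_mul]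
    rfl
  rw [← sum_fiberwise_of_maps_to (g := runs) (t := range (i + 1)) fun S hS =>
    mem_range.mpr (Nat.lt_succ_of_le ((runs_le_card S).trans (mem_filter.mp hS).2.le))]
  simp_rw [hfiber]
  rw [← sum_subset (s₁ := Icc 1 (min i (n - i))) ?_ ?_, mul_sum]
  · refine sum_congr rfl fun k hk => ?_
    have hk := mem_Icc.mp hk
    rw [← map_natCast (C : ℚ →+* MvPolynomial (Fin 3) ℚ),
      cast_card_cyclicRunSets hi hin (by omega)]
    simp only [map_mul, map_natCast, Nat.cast_mul]
    ring
  · intro k hk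
    simp only [mem_Icc, mem_range] at hk ⊢
    omega
  · intro k hk₁ hk
    simp only [mem_range, mem_Icc, not_and_or, not_le, min_lt_iff] at hk₁ hk
    rw [card_cyclicRunSets_eq_zero hi hin (by omega), Nat.cast_zero, zero_mul]

lemma sum_X_pow_kG_cG_of_lt {i : ℕ} (hin : i < n) :
    ∑ S : Finset (Fin n) with #S = i, (X 0 : MvPolynomial (Fin 3) ℚ) ^ kG (cycleSubgraph S) *
        X 1 ^ #S * X 2 ^ cG (cycleSubgraph S) =
      X 0 ^ (n - i) * X 1 ^ i * ∑ S : Finset (Fin n) with #S = i, X 2 ^ runs S := by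
  rw [mul_sum]
  refine sum_congr rfl fun S hS => ?_
  have hS : #S = i := (mem_filter.mp hS).2
  have hSu : S ≠ univ := fun h => by simp [h] at hS; omega
  rw [kG_cycleSubgraph hSu, cG_cycleSubgraph hSu, hS]

theorem map_ccp_cycleG (hn : 2 < n) :
    MvPolynomial.map (Int.castRingHom ℚ) (ccp (cycleG n)) =
      X 0 ^ n + (∑ i ∈ Icc 1 (n - 1),
        C ((n : ℚ) / ((n : ℚ) - (i : ℚ))) * X 0 ^ (n - i) * X 1 ^ i *
          ∑ k ∈ Icc 1 (min i (n - i)),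
            (((i - 1).choose (k - 1) * (n - i).choose k : ℕ) : MvPolynomial (Fin 3) ℚ) *
              X 2 ^ k)
      + X 0 * X 1 ^ n * X 2 := by
  have hempty :
      ∑ S : Finset (Fin n) with #S = 0, (X 2 : MvPolynomial (Fin 3) ℚ) ^ runs S = 1 := by
    rw [show ({S | #S = 0} : Finset (Finset (Fin n))) = {∅} by ext; simp, sum_singleton]
    simp [runs]
  simp only [ccp_cycleG hn, map_sum, map_mul, map_pow, map_X]
  rw [← sum_fiberwise_of_maps_to (g := card) (t := range (n + 1)) fun S _ =>
      mem_range.mpr (Nat.lt_succ_of_le ((card_le_univ S).trans_eq (Fintype.card_fin n))),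
    sum_range_succ, range_eq_Ico, sum_eq_sum_Ico_succ_bot (by omega),
    show Ico (0 + 1) n = Icc 1 (n - 1) by ext; simp; omega,
    sum_X_pow_kG_cG_of_lt (by omega : 0 < n), hempty, filter_card_eq_univ, sum_singleton,
    kG_cycleSubgraph_univ, cG_cycleSubgraph_univ, card_univ, Fintype.card_fin]
  congr 1
  · congr 1
    · simp
    · refine sum_congr rfl fun i hi => ?_
      have hi := mem_Icc.mp hi
      rw [sum_X_pow_kG_cG_of_lt (by omega), sum_X_pow_runs (by omega) (by omega)]
      ring
  · simp

end Polynomial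

/-- For the cycle `Cₙ` with `n > 2`,
`C(Cₙ) = xⁿ + ∑_{i=1}^{n−1} (n/(n−i))·x^{n−i} yⁱ
  ∑_{k=1}^{min(i,n−i)} C(i−1,k−1)·C(n−i,k)·z^k + x yⁿ z`
(as a polynomial with rational coefficients).  In particular, the coefficient of
`x^{n−k} y^k z^k` in `C(Cₙ)` equals `(n/(n−k))·C(n−k,k)`, the number of `k`-matchings
of `Cₙ`. -/
theorem ccp_cycle (n : ℕ) (hn : 2 < n) :
    MvPolynomial.map (Int.castRingHom ℚ) (ccp (cycleG n)) =
      X 0 ^ n + (∑ i ∈ Finset.Icc 1 (n - 1),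
        MvPolynomial.C ((n : ℚ) / ((n : ℚ) - (i : ℚ))) * X 0 ^ (n - i) * X 1 ^ i *
          ∑ k ∈ Finset.Icc 1 (min i (n - i)),
            (((i - 1).choose (k - 1) * (n - i).choose k : ℕ) : MvPolynomial (Fin 3) ℚ) *
              X 2 ^ k)
      + X 0 * X 1 ^ n * X 2 ∧
    ∀ k : ℕ, 0 < k → k < n →
      (coeff3 (ccp (cycleG n)) (n - k) k k : ℚ) =
        (n : ℚ) / ((n : ℚ) - (k : ℚ)) * ((n - k).choose k : ℚ) ∧
      coeff3 (ccp (cycleG n)) (n - k) k k = numMatchings n k := by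
  have : NeZero n := ⟨by omega⟩
  have : Nontrivial (Fin n) := Fin.nontrivial_iff_two_le.mpr (by omega)
  refine ⟨map_ccp_cycleG hn, fun k hk hkn => ⟨?_, ?_⟩⟩
  · rw [coeff3_ccp_cycleG hn hkn, Int.cast_natCast, cast_card_cyclicRunSets hk hkn hk,
      Nat.choose_self, Nat.cast_one, one_mul]
  · rw [coeff3_ccp_cycleG hn hkn, numMatchings_eq_card_cyclicRunSets hn]

end
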